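/- Fix real numbers a, b, c ≥ 0 with a + b + c = 1, and define ζ(z) as above and the parametrized curve 𝔅 = {(x(z), y(z)) : z ∈ [0,∞]} where x(z) = ζ'(z) and y(z) = z·ζ'(z) − ζ(z). Then (x(0), y(0)) = (1/2 + bc/(a+c), 0) and lim_{z→∞}(x(z), y(z)) = (1+b, 1/2 + ab/(b+c)). -/

import Mathlib

open Real Filter

/-- The function `ζ(z)` from the arctic-curve parametrization. -/
noncomputable def zeta (a b c z : ℝ) : ℝ :=
  Real.sqrt (z ^ 2 + z + 1) + Real.sqrt ((z * b + z * c + a + c) ^ 2 - 4 * a * b * z) / 2 +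
    ((b - c) * z - a - c) / 2 - 1

/-- The explicit derivative `ζ'(z)`. -/
noncomputable def zeta' (a b c z : ℝ) : ℝ :=
  (2 * z + 1) / (2 * Real.sqrt (z ^ 2 + z + 1)) +
    ((b + c) ^ 2 * z - a * b + a * c + b * c + c ^ 2) /
      (2 * Real.sqrt ((z * b + z * c + a + c) ^ 2 - 4 * a * b * z)) +
    (b - c) / 2

/-- The `x`-coordinate of the curve `𝔅`. -/
noncomputable def xCurve (a b c z : ℝ) : ℝ := zeta' a b c z

/-- The `y`-coordinate of the curve `𝔅`. -/
noncomputable def yCurve (a b c z : ℝ) : ℝ := z * zeta' a b c z - zeta a b c z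

/-!
Both square roots in `ζ` are square roots of quadratics `α z² + β z + γ` with `α > 0`. Pulling
`z` out, `√(α z² + β z + γ) = z √(α + β t + γ t²)` with `t = z⁻¹`, turns `ζ'(z)` and
`z ζ'(z) - ζ(z)` into functions of `t` that are continuous at `t = 0`, where the two square-root
terms contribute `√α` and `-β / (2√α)` respectively; the limits as `z → ∞` are read off termwise.
-/

open Topology

section SqrtQuadratic

variable {α β γ : ℝ}

lemma sqrt_quadratic_eq_mul_sqrt_inv {z : ℝ} (hz : 0 < z) :
    √(α * z ^ 2 + β * z + γ) = z * √(α + β * z⁻¹ + γ * z⁻¹ ^ 2) := by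
  rw [show α * z ^ 2 + β * z + γ = z ^ 2 * (α + β * z⁻¹ + γ * z⁻¹ ^ 2) by field_simp,
    Real.sqrt_mul (sq_nonneg z), Real.sqrt_sq hz.le]

lemma tendsto_const_add_mul_inv_atTop (p q : ℝ) :
    Tendsto (fun z : ℝ => p + q * z⁻¹) atTop (𝓝 p) := by
  simpa using (tendsto_inv_atTop_zero.const_mul q).const_add p

lemma tendsto_quadratic_inv_atTop (α β γ : ℝ) :
    Tendsto (fun z : ℝ => α + β * z⁻¹ + γ * z⁻¹ ^ 2) atTop (𝓝 α) := by
  simpa using (tendsto_const_add_mul_inv_atTop α β).add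
    ((tendsto_inv_atTop_zero.pow 2).const_mul γ)

theorem tendsto_deriv_sqrt_quadratic_atTop (hα : 0 < α) :
    Tendsto (fun z => (2 * α * z + β) / (2 * √(α * z ^ 2 + β * z + γ))) atTop (𝓝 √α) := by
  have hlim := (tendsto_const_add_mul_inv_atTop (2 * α) β).div
    ((tendsto_quadratic_inv_atTop α β γ).sqrt.const_mul 2) (by positivity)
  rw [mul_div_mul_left _ _ two_ne_zero, Real.div_sqrt] at hlim
  refine hlim.congr' ?_
  filter_upwards [eventually_gt_atTop 0] with z hz
  rw [Pi.div_apply, sqrt_quadratic_eq_mul_sqrt_inv hz]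
  field_simp

theorem tendsto_mul_deriv_sub_sqrt_quadratic_atTop (hα : 0 < α) :
    Tendsto (fun z => z * ((2 * α * z + β) / (2 * √(α * z ^ 2 + β * z + γ))) -
      √(α * z ^ 2 + β * z + γ)) atTop (𝓝 (-β / (2 * √α))) := by
  have hR := tendsto_quadratic_inv_atTop α β γ
  have hlim := (tendsto_const_add_mul_inv_atTop (-β) (-2 * γ)).div
    (hR.sqrt.const_mul 2) (by positivity)
  refine hlim.congr' ?_
  filter_upwards [eventually_gt_atTop 0, hR.eventually_const_lt hα] with z hz hRpos
  rw [Pi.div_apply, sqrt_quadratic_eq_mul_sqrt_inv hz]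
  have hs0 := Real.sqrt_pos.2 hRpos
  have hs := Real.sq_sqrt hRpos.le
  set s := √(α + β * z⁻¹ + γ * z⁻¹ ^ 2)
  have hzs : z ^ 2 * s ^ 2 = α * z ^ 2 + β * z + γ := by rw [hs]; field_simp
  field_simp
  linear_combination 2 * hzs

end SqrtQuadratic

section Curve

variable {a b c : ℝ}

lemma zeta_discriminant_eq (a b c z : ℝ) :
    (z * b + z * c + a + c) ^ 2 - 4 * a * b * z =
      (b + c) ^ 2 * z ^ 2 + (2 * (b + c) * (a + c) - 4 * a * b) * z + (a + c) ^ 2 := by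
  ring

lemma sqrt_zeta_discriminant_zero (hac : 0 ≤ a + c) :
    √((0 * b + 0 * c + a + c) ^ 2 - 4 * a * b * 0) = a + c := by
  rw [zeta_discriminant_eq]
  simpa using Real.sqrt_sq hac

lemma xCurve_zero (hac : 0 < a + c) : xCurve a b c 0 = 1 / 2 + b * c / (a + c) := by
  rw [xCurve, zeta', sqrt_zeta_discriminant_zero hac.le]
  field_simp
  norm_num
  ring

lemma yCurve_zero (hac : 0 ≤ a + c) : yCurve a b c 0 = 0 := by
  rw [yCurve, zeta, sqrt_zeta_discriminant_zero hac]
  norm_num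
  ring

lemma tendsto_xCurve_atTop (hbc : 0 < b + c) :
    Tendsto (xCurve a b c) atTop (𝓝 (1 + b)) := by
  have h₁ := tendsto_deriv_sqrt_quadratic_atTop (β := 1) (γ := 1) one_pos
  have h₂ := tendsto_deriv_sqrt_quadratic_atTop (β := 2 * (b + c) * (a + c) - 4 * a * b)
    (γ := (a + c) ^ 2) (by positivity : 0 < (b + c) ^ 2)
  rw [Real.sqrt_one] at h₁
  rw [Real.sqrt_sq hbc.le] at h₂
  convert (h₁.add (h₂.div_const 2)).add_const ((b - c) / 2) using 2 with z
  · simp only [xCurve, zeta', zeta_discriminant_eq]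
    ring_nf
  · ring

lemma tendsto_yCurve_atTop (hbc : 0 < b + c) :
    Tendsto (yCurve a b c) atTop (𝓝 (1 / 2 + a * b / (b + c))) := by
  have h₁ := tendsto_mul_deriv_sub_sqrt_quadratic_atTop (β := 1) (γ := 1) one_pos
  have h₂ := tendsto_mul_deriv_sub_sqrt_quadratic_atTop
    (β := 2 * (b + c) * (a + c) - 4 * a * b) (γ := (a + c) ^ 2) (by positivity : 0 < (b + c) ^ 2)
  rw [Real.sqrt_one] at h₁
  rw [Real.sqrt_sq hbc.le] at h₂
  convert (h₁.add (h₂.div_const 2)).add_const ((a + c) / 2 + 1) using 2 with z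
  · simp only [yCurve, zeta, zeta', zeta_discriminant_eq]
    ring_nf
  · field_simp
    ring

end Curve

theorem curve_endpoints_general (a b c : ℝ) (ha : 0 < a) (hb : 0 < b) (hc : 0 < c) :
    (xCurve a b c 0, yCurve a b c 0) = (1 / 2 + b * c / (a + c), 0) ∧
    Tendsto (fun z => (xCurve a b c z, yCurve a b c z)) atTop
      (nhds (1 + b, 1 / 2 + a * b / (b + c))) := by
  have hac : 0 < a + c := by positivity
  have hbc : 0 < b + c := by positivity
  rw [xCurve_zero hac, yCurve_zero hac.le]
  exact ⟨rfl, (tendsto_xCurve_atTop hbc).prodMk_nhds (tendsto_yCurve_atTop hbc)⟩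

/-- Endpoints of the curve `𝔅`: `(x(0), y(0)) = (1/2 + bc/(a+c), 0)` and
`lim_{z→∞} (x(z), y(z)) = (1+b, 1/2 + ab/(b+c))`. -/
theorem curve_endpoints (a b c : ℝ) (ha : 0 < a) (hb : 0 < b) (hc : 0 < c)
    (habc : a + b + c = 1) :
    (xCurve a b c 0, yCurve a b c 0) = (1 / 2 + b * c / (a + c), 0) ∧
    Tendsto (fun z => (xCurve a b c z, yCurve a b c z)) atTop
      (nhds (1 + b, 1 / 2 + a * b / (b + c))) :=
  curve_endpoints_general a b c ha hb hc
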